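/- arXiv:2008.03828 — 2 statements merged into one kernel-verified Lean document; each statement's English description precedes it below -/
import Mathlib

section
/- Let q be a prime power, F_q a finite field with q elements, and let f_1, ..., f_L, α_1, ..., α_N be L + N pairwise distinct elements of F_q with N = L + T. Then the N × N Cauchy–Vandermonde matrix C whose n-th row is (1/(f_1 − α_n), ..., 1/(f_L − α_n), 1, α_n, α_n², ..., α_n^{T−1}) is invertible over F_q. -/
open Polynomial Finset

set_option maxRecDepth 8000

/-- The N × N Cauchy–Vandermonde matrix built from L+N pairwise distinct
elements f_1,...,f_L, α_1,...,α_N of a finite field with q elements,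
where N = L + T, is invertible. -/
theorem stmt_0 (q : ℕ) (F : Type*) [Field F] [Fintype F]
    (hq : Fintype.card F = q)
    (L T N : ℕ) (hL : 0 < L) (hT : 0 < T) (hN : N = L + T)
    (f : Fin L → F) (α : Fin N → F)
    (hdist : Function.Injective (Sum.elim f α : Fin L ⊕ Fin N → F))
    (C : Matrix (Fin N) (Fin N) F)
    (hC : ∀ (n : Fin N) (m : Fin N),
      C n m = if h : (m : ℕ) < L then (f ⟨m, h⟩ - α n)⁻¹
              else (α n) ^ ((m : ℕ) - L)) :
    IsUnit C := by
  classical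
  subst hN
  -- basic distinctness facts
  have hfinj : Function.Injective f := fun a b h => by
    have := hdist (a₁ := Sum.inl a) (a₂ := Sum.inl b) (by simpa using h)
    simpa using this
  have hαinj : Function.Injective α := fun a b h => by
    have := hdist (a₁ := Sum.inr a) (a₂ := Sum.inr b) (by simpa using h)
    simpa using this
  have hfα : ∀ (k : Fin L) (n : Fin (L + T)), f k ≠ α n := fun k n h => by
    have := hdist (a₁ := Sum.inl k) (a₂ := Sum.inr n) (by simpa using h)
    simp at this
  rw [Matrix.isUnit_iff_isUnit_det, isUnit_iff_ne_zero]
  intro hdet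
  obtain ⟨v, hv, hmul⟩ := Matrix.exists_mulVec_eq_zero_iff.mpr hdet
  apply hv
  -- components of v
  set a : Fin L → F := fun l => v (Fin.castAdd T l) with ha
  set b : Fin T → F := fun j => v (Fin.natAdd L j) with hb
  -- the linear relations
  have hrel : ∀ n : Fin (L + T),
      (∑ l : Fin L, (f l - α n)⁻¹ * a l) + (∑ j : Fin T, α n ^ (j : ℕ) * b j) = 0 := by
    intro n
    have := congrFun hmul n
    rw [Matrix.mulVec, dotProduct, Fin.sum_univ_add] at this
    simp only [Pi.zero_apply] at this
    rw [← this]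
    congr 1
    · apply Finset.sum_congr rfl; intro l _
      rw [hC]
      have h1 : ((Fin.castAdd T l : Fin (L+T)) : ℕ) < L := l.isLt
      rw [dif_pos h1]
      rfl
    · apply Finset.sum_congr rfl; intro j _
      rw [hC]
      have h1 : ¬ ((Fin.natAdd L j : Fin (L+T)) : ℕ) < L := by simp
      rw [dif_neg h1]
      have h2 : ((Fin.natAdd L j : Fin (L+T)) : ℕ) - L = (j : ℕ) := by simp
      rw [h2]
  -- polynomials
  set G : Fin L → F[X] := fun l => ∏ k ∈ univ.erase l, (Polynomial.C (f k) - X) with hG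
  set Pr : F[X] := ∏ k : Fin L, (Polynomial.C (f k) - X) with hPr
  set Q : F[X] := ∑ j : Fin T, Polynomial.C (b j) * X ^ (j : ℕ) with hQ
  set P : F[X] := (∑ l : Fin L, Polynomial.C (a l) * G l) + Q * Pr with hP
  have hdeg1 : ∀ k : Fin L, (Polynomial.C (f k) - X).natDegree ≤ 1 := fun k =>
    (natDegree_sub_le _ _).trans (by simp)
  have hGdeg : ∀ l, (G l).natDegree ≤ L - 1 := by
    intro l
    refine (natDegree_prod_le _ _).trans ?_
    calc ∑ k ∈ univ.erase l, (Polynomial.C (f k) - X).natDegree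
        ≤ ∑ k ∈ univ.erase l, 1 := by exact Finset.sum_le_sum (fun k _ => hdeg1 k)
      _ = L - 1 := by simp [Finset.card_erase_of_mem]
  have hPrdeg : Pr.natDegree ≤ L := by
    refine (natDegree_prod_le _ _).trans ?_
    calc ∑ k : Fin L, (Polynomial.C (f k) - X).natDegree
        ≤ ∑ _k : Fin L, 1 := by exact Finset.sum_le_sum (fun k _ => hdeg1 k)
      _ = L := by simp
  have hQdeg : Q.natDegree ≤ T - 1 := by
    refine natDegree_sum_le_of_forall_le _ _ ?_
    intro j _
    refine (natDegree_mul_le).trans ?_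
    simp only [natDegree_C, natDegree_X_pow, zero_add]
    omega
  have hPdeg : P.natDegree < L + T := by
    rw [hP]
    refine lt_of_le_of_lt (natDegree_add_le _ _) ?_
    rw [max_lt_iff]
    constructor
    · refine lt_of_le_of_lt (natDegree_sum_le_of_forall_le _ _ ?_) (by omega : L - 1 < L + T)
      intro l _
      refine natDegree_mul_le.trans ?_
      simp only [natDegree_C, zero_add]
      exact hGdeg l
    · refine lt_of_le_of_lt natDegree_mul_le ?_
      omega
  -- P vanishes at all α n
  have hPeval : ∀ n : Fin (L + T), P.eval (α n) = 0 := by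
    intro n
    have hprodval : Pr.eval (α n) = ∏ k : Fin L, (f k - α n) := by
      simp [hPr, eval_prod]
    have hGval : ∀ l, (G l).eval (α n) = (f l - α n)⁻¹ * ∏ k : Fin L, (f k - α n) := by
      intro l
      have hne : f l - α n ≠ 0 := sub_ne_zero.mpr (hfα l n)
      have heq : (f l - α n) * ∏ k ∈ univ.erase l, (f k - α n) = ∏ k : Fin L, (f k - α n) :=
        Finset.mul_prod_erase univ (fun k => f k - α n) (mem_univ l)
      rw [hG]
      simp only [eval_prod, eval_sub, eval_C, eval_X]
      rw [← heq, inv_mul_cancel_left₀ hne]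
    have hQval : Q.eval (α n) = ∑ j : Fin T, α n ^ (j : ℕ) * b j := by
      rw [hQ, eval_finset_sum]
      exact Finset.sum_congr rfl fun j _ => by
        rw [eval_mul, eval_C, eval_pow, eval_X, mul_comm]
    rw [hP]
    simp only [eval_add, eval_mul, eval_finset_sum, eval_mul, eval_C]
    rw [hprodval, hQval]
    have : ∑ l : Fin L, a l * (G l).eval (α n)
        = (∏ k : Fin L, (f k - α n)) * ∑ l : Fin L, (f l - α n)⁻¹ * a l := by
      rw [Finset.mul_sum]
      apply Finset.sum_congr rfl
      intro l _
      rw [hGval l]; ring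
    rw [this]
    have := hrel n
    linear_combination (∏ k : Fin L, (f k - α n)) * this
  -- hence P = 0
  have hP0 : P = 0 := by
    apply Polynomial.eq_zero_of_natDegree_lt_card_of_eval_eq_zero P hαinj hPeval
    simpa using hPdeg
  -- evaluate at f l to get a l = 0
  have ha0 : ∀ l, a l = 0 := by
    intro l
    have hPrf : Pr.eval (f l) = 0 := by
      rw [hPr]
      simp only [eval_prod, eval_sub, eval_C, eval_X]
      exact Finset.prod_eq_zero (mem_univ l) (by ring)
    have hGf : ∀ l', l' ≠ l → (G l').eval (f l) = 0 := by
      intro l' hll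
      rw [hG]
      simp only [eval_prod, eval_sub, eval_C, eval_X]
      exact Finset.prod_eq_zero (Finset.mem_erase.mpr ⟨hll.symm, mem_univ l⟩) (by ring)
    have hGl : (G l).eval (f l) ≠ 0 := by
      rw [hG]
      simp only [eval_prod, eval_sub, eval_C, eval_X]
      apply Finset.prod_ne_zero_iff.mpr
      intro k hk
      exact sub_ne_zero.mpr (fun h => (Finset.mem_erase.mp hk).1 (hfinj h))
    have := congrArg (Polynomial.eval (f l)) hP0
    rw [hP] at this
    simp only [eval_add, eval_mul, eval_finset_sum, eval_mul, eval_C, eval_zero, hPrf,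
      mul_zero, add_zero] at this
    rw [Finset.sum_eq_single l] at this
    · exact (mul_eq_zero.mp this).resolve_right hGl
    · intro l' _ hll; rw [hGf l' hll, mul_zero]
    · intro h; exact absurd (mem_univ l) h
  -- then Q * Pr = 0, Pr ≠ 0, so Q = 0
  have hQ0 : Q = 0 := by
    have hPr0 : Pr ≠ 0 := by
      rw [hPr]
      apply Finset.prod_ne_zero_iff.mpr
      intro k _
      intro h
      have := congrArg (Polynomial.coeff · 1) h
      simp at this
    have : Q * Pr = 0 := by
      have := hP0
      rw [hP] at this
      rwa [Finset.sum_eq_zero (fun l _ => by rw [ha0 l, map_zero, zero_mul]), zero_add] at this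
    exact (mul_eq_zero.mp this).resolve_right hPr0
  have hb0 : ∀ j, b j = 0 := by
    intro j
    have := congrArg (Polynomial.coeff · (j : ℕ)) hQ0
    simp only [hQ, Polynomial.finset_sum_coeff, Polynomial.coeff_C_mul,
      Polynomial.coeff_X_pow, Polynomial.coeff_zero] at this
    rw [Finset.sum_eq_single j] at this
    · simpa using this
    · intro j' _ hjj
      rw [if_neg (fun h => hjj (Fin.ext h.symm)), mul_zero]
    · intro h; exact absurd (mem_univ j) h
  -- conclude v = 0
  funext m
  refine Fin.addCases (fun l => ?_) (fun j => ?_) m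
  · exact ha0 l
  · exact hb0 j
end

section
/- Let F_q be a finite field, f₁, ..., f_L, α₁, ..., α_N be L + N distinct elements of F_q with N = L + T. Suppose answers A_n ∈ F_q, n = 1, ..., N, satisfy A_n = Σ_{l=1}^{L} w_l/(f_l − α_n) + Σ_{j=0}^{T−1} J_j · α_n^j for unknowns w₁, ..., w_L, J₀, ..., J_{T−1} ∈ F_q. Then (w₁, ..., w_L, J₀, ..., J_{T−1}) is uniquely determined by (A₁, ..., A_N); in particular each desired symbol w_l is decodable from the N answers. -/
open Polynomial

/-- Decodability of the CSA scheme: if the N = L + T answers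
A_n = Σ_l w_l/(f_l − α_n) + Σ_j J_j α_n^j agree for two sets of unknowns,
the unknowns coincide; i.e., (w, J) is uniquely determined by the answers. -/
theorem stmt_19 (F : Type*) [Field F] [Fintype F]
    (L T N : ℕ) (hL : 0 < L) (hT : 0 < T) (hN : N = L + T)
    (f : Fin L → F) (α : Fin N → F)
    (hdist : Function.Injective (Sum.elim f α : Fin L ⊕ Fin N → F))
    (w w' : Fin L → F) (J J' : Fin T → F)
    (h : ∀ n : Fin N,
      ∑ l : Fin L, w l / (f l - α n) + ∑ j : Fin T, J j * α n ^ (j : ℕ) =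
      ∑ l : Fin L, w' l / (f l - α n) + ∑ j : Fin T, J' j * α n ^ (j : ℕ)) :
    w = w' ∧ J = J' := by
  classical
  set δw : Fin L → F := fun l => w l - w' l with hδw
  set δJ : Fin T → F := fun j => J j - J' j with hδJ
  have hfα : ∀ l n, f l - α n ≠ 0 := by
    intro l n hln
    have : (Sum.inl l : Fin L ⊕ Fin N) = Sum.inr n :=
      hdist (by simpa [sub_eq_zero] using hln)
    simp at this
  have hfinj : Function.Injective f := fun a b hab => by
    have : (Sum.inl a : Fin L ⊕ Fin N) = Sum.inl b := hdist (by simpa using hab)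
    simpa using this
  have hαinj : Function.Injective α := fun a b hab => by
    have : (Sum.inr a : Fin L ⊕ Fin N) = Sum.inr b := hdist (by simpa using hab)
    simpa using this
  set Q : F[X] := ∑ j : Fin T, C (δJ j) * X ^ (j : ℕ) with hQ
  set P : F[X] := (∑ l : Fin L, C (δw l) * ∏ k ∈ Finset.univ.erase l, (C (f k) - X))
      + Q * ∏ l : Fin L, (C (f l) - X) with hP
  -- hypothesis in difference form
  have hdiff : ∀ n : Fin N,
      ∑ l : Fin L, δw l / (f l - α n) + ∑ j : Fin T, δJ j * α n ^ (j : ℕ) = 0 := by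
    intro n
    simp only [hδw, hδJ, sub_div, sub_mul, Finset.sum_sub_distrib]
    linear_combination h n
  -- P vanishes at all α n
  have heval : ∀ n : Fin N, P.eval (α n) = 0 := by
    intro n
    have key : P.eval (α n) =
        (∏ l : Fin L, (f l - α n)) *
          (∑ l : Fin L, δw l / (f l - α n) + ∑ j : Fin T, δJ j * α n ^ (j : ℕ)) := by
      simp only [hP, hQ, eval_add, eval_mul, eval_finset_sum, eval_prod, eval_sub, eval_C,
        eval_X, eval_pow, eval_mul]
      rw [mul_add]
      congr 1
      · rw [Finset.mul_sum]
        apply Finset.sum_congr rfl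
        intro l _
        have hprod : ∏ k : Fin L, (f k - α n)
            = (f l - α n) * ∏ k ∈ Finset.univ.erase l, (f k - α n) :=
          (Finset.mul_prod_erase _ _ (Finset.mem_univ l)).symm
        rw [hprod]
        field_simp [hfα l n]
      · ring
    rw [key, hdiff n, mul_zero]
  -- degree bound
  have hdeg : P.natDegree < N := by
    have h1 : ∀ l : Fin L,
        (C (δw l) * ∏ k ∈ Finset.univ.erase l, (C (f k) - X)).natDegree ≤ L - 1 := by
      intro l
      calc (C (δw l) * ∏ k ∈ Finset.univ.erase l, (C (f k) - X)).natDegree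
          ≤ (C (δw l)).natDegree + (∏ k ∈ Finset.univ.erase l, (C (f k) - X)).natDegree :=
            natDegree_mul_le
        _ ≤ 0 + ∑ k ∈ Finset.univ.erase l, (C (f k) - X).natDegree := by
            gcongr
            · exact le_of_eq (natDegree_C _)
            · exact natDegree_prod_le _ _
        _ ≤ 0 + ∑ _k ∈ Finset.univ.erase l, 1 := by
            gcongr with k hk
            calc (C (f k) - X).natDegree ≤ max (C (f k)).natDegree X.natDegree :=
                natDegree_sub_le _ _
              _ ≤ 1 := by simp
        _ = L - 1 := by
            simp [Finset.card_erase_of_mem]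
    have hQdeg : Q.natDegree ≤ T - 1 := by
      apply natDegree_sum_le_of_forall_le
      intro j _
      calc (C (δJ j) * X ^ (j : ℕ)).natDegree ≤ (j : ℕ) := by
            exact (natDegree_C_mul_le _ _).trans_eq (natDegree_X_pow _)
        _ ≤ T - 1 := Nat.le_sub_one_of_lt j.isLt
    have hProd : (∏ l : Fin L, (C (f l) - X)).natDegree ≤ L := by
      calc (∏ l : Fin L, (C (f l) - X)).natDegree
          ≤ ∑ l : Fin L, (C (f l) - X).natDegree := natDegree_prod_le _ _
        _ ≤ ∑ _l : Fin L, 1 := by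
            gcongr with k hk
            calc (C (f k) - X).natDegree ≤ max (C (f k)).natDegree X.natDegree :=
                natDegree_sub_le _ _
              _ ≤ 1 := by simp
        _ = L := by simp
    have : P.natDegree ≤ N - 1 := by
      apply natDegree_add_le_of_degree_le
      · apply natDegree_sum_le_of_forall_le
        intro l _
        exact (h1 l).trans (by omega)
      · calc (Q * ∏ l : Fin L, (C (f l) - X)).natDegree
            ≤ Q.natDegree + (∏ l : Fin L, (C (f l) - X)).natDegree := natDegree_mul_le
          _ ≤ (T - 1) + L := add_le_add hQdeg hProd
          _ ≤ N - 1 := by omega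
    omega
  have hP0 : P = 0 :=
    eq_zero_of_natDegree_lt_card_of_eval_eq_zero P hαinj heval (by simpa using hdeg)
  -- w = w'
  have hw0 : ∀ l, δw l = 0 := by
    intro l
    have := congrArg (fun p => Polynomial.eval (f l) p) hP0
    simp only [hP, eval_add, eval_finset_sum, eval_mul, eval_prod, eval_sub, eval_C, eval_X,
      eval_zero] at this
    rw [Finset.sum_eq_single l] at this
    · have h2 : ∏ k : Fin L, (f k - f l) = 0 :=
        Finset.prod_eq_zero (Finset.mem_univ l) (by simp)
      rw [h2, mul_zero, add_zero] at this
      have h3 : ∏ k ∈ Finset.univ.erase l, (f k - f l) ≠ 0 := by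
        apply Finset.prod_ne_zero_iff.2
        intro k hk
        rw [Finset.mem_erase] at hk
        exact sub_ne_zero_of_ne (fun hkl => hk.1 (hfinj hkl))
      exact (mul_eq_zero.1 this).resolve_right h3
    · intro b _ hb
      have hl : l ∈ Finset.univ.erase b :=
        Finset.mem_erase.2 ⟨fun hh => hb hh.symm, Finset.mem_univ l⟩
      rw [Finset.prod_eq_zero hl (by simp), mul_zero]
    · simp
  -- J = J'
  have hQ0 : Q = 0 := by
    have hsum0 : (∑ l : Fin L, C (δw l) * ∏ k ∈ Finset.univ.erase l, (C (f k) - X)) = 0 := by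
      apply Finset.sum_eq_zero
      intro l _
      rw [hw0 l, map_zero, zero_mul]
    have hprodne : (∏ l : Fin L, (C (f l) - X)) ≠ 0 := by
      apply Finset.prod_ne_zero_iff.2
      intro l _
      have : (X - C (f l) : F[X]) ≠ 0 := X_sub_C_ne_zero (f l)
      intro hc
      apply this
      rw [show (X - C (f l) : F[X]) = -(C (f l) - X) from (neg_sub _ _).symm, hc, neg_zero]
    have : Q * ∏ l : Fin L, (C (f l) - X) = 0 := by
      have := hP0
      rw [hP, hsum0, zero_add] at this
      exact this
    exact (mul_eq_zero.1 this).resolve_right hprodne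
  have hJ0 : ∀ j, δJ j = 0 := by
    intro j
    have := congrArg (fun p => Polynomial.coeff p (j : ℕ)) hQ0
    simp only [hQ, finset_sum_coeff, coeff_C_mul, coeff_X_pow, coeff_zero] at this
    rw [Finset.sum_eq_single j] at this
    · simpa using this
    · intro b _ hb
      have : (b : ℕ) ≠ (j : ℕ) := fun hh => hb (Fin.ext hh)
      simp [Ne.symm this]
    · simp
  constructor
  · funext l
    have := hw0 l
    simp only [hδw, sub_eq_zero] at this
    exact this
  · funext j
    have := hJ0 j
    simp only [hδJ, sub_eq_zero] at this
    exact this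
end
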